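/- arXiv:1207.1233 — 7 statements merged into one kernel-verified Lean document; each statement's English description precedes it below -/
import Mathlib

section
/- For any subset A of the discrete cube {0,1}^n, the edge boundary ∂A (the set of edges of the hypercube graph with exactly one endpoint in A) satisfies |∂A| ≥ |A| · log₂(2^n / |A|). -/
open Finset Real

lemma log_one_add_ge (t : ℝ) (h0 : 0 ≤ t) (h1 : t ≤ 1) :
    t * Real.log 2 ≤ Real.log (1 + t) := by
  have hexp : Real.exp (t * Real.log 2) ≤ 1 + t := by
    have := convexOn_exp.2 (Set.mem_univ (0:ℝ)) (Set.mem_univ (Real.log 2))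
      (by linarith : (0:ℝ) ≤ 1 - t) h0 (by ring)
    rw [smul_eq_mul, smul_eq_mul, smul_eq_mul, smul_eq_mul, mul_zero, zero_add,
      Real.exp_zero, Real.exp_log two_pos] at this
    linarith
  calc t * Real.log 2 = Real.log (Real.exp (t * Real.log 2)) := (Real.log_exp _).symm
    _ ≤ Real.log (1 + t) := Real.log_le_log (Real.exp_pos _) hexp

lemma core_ineq (a b : ℝ) (hb : 0 < b) (hba : b ≤ a) :
    a * Real.log a + b * Real.log b + 2 * b * Real.log 2 ≤ (a + b) * Real.log (a + b) := by
  have ha : 0 < a := lt_of_lt_of_le hb hba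
  have h1 : b * Real.log b + b * Real.log 2 ≤ b * Real.log (a + b) := by
    have : Real.log (2 * b) ≤ Real.log (a + b) :=
      Real.log_le_log (by linarith) (by linarith)
    rw [Real.log_mul (by norm_num) hb.ne'] at this
    nlinarith [this, hb.le]
  have h2 : a * Real.log a + b * Real.log 2 ≤ a * Real.log (a + b) := by
    have ht0 : 0 ≤ b / a := by positivity
    have ht1 : b / a ≤ 1 := (div_le_one ha).mpr hba
    have := log_one_add_ge (b / a) ht0 ht1
    have heq : Real.log (1 + b / a) = Real.log (a + b) - Real.log a := by
      rw [show (1 : ℝ) + b / a = (a + b) / a by field_simp, Real.log_div (by linarith) ha.ne']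
    rw [heq] at this
    have := mul_le_mul_of_nonneg_left this ha.le
    rw [mul_sub] at this
    have hba' : b / a * a = b := div_mul_cancel₀ b ha.ne'
    rw [show a * (b / a * log 2) = b / a * a * log 2 by ring, hba'] at this
    linarith
  linarith

lemma logb_two_pow_div (n : ℕ) (x : ℝ) (hx : 0 < x) :
    Real.logb 2 ((2:ℝ)^n / x) = n - Real.logb 2 x := by
  rw [Real.logb_div (by positivity) hx.ne']
  rw [Real.logb_pow]
  simp [Real.logb_self_eq_one one_lt_two]

lemma main_ineq (n : ℕ) (a b : ℝ) (hb : 0 ≤ b) (hba : b ≤ a) :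
    (a + b) * Real.logb 2 ((2:ℝ)^(n+1) / (a + b)) ≤
      a * Real.logb 2 ((2:ℝ)^n / a) + b * Real.logb 2 ((2:ℝ)^n / b) + (a - b) := by
  rcases eq_or_lt_of_le (hb.trans hba) with ha | ha
  · have hb0 : b = 0 := le_antisymm (hba.trans_eq ha.symm) hb
    simp [← ha, hb0]
  rcases eq_or_lt_of_le hb with hb0 | hb0
  · rw [← hb0]
    simp only [add_zero, zero_mul, sub_zero]
    rw [logb_two_pow_div n a ha, logb_two_pow_div (n+1) a (by simpa [← hb0] using ha)]
    push_cast
    ring_nf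
    exact le_refl _
  · -- 0 < b ≤ a
    have hab : 0 < a + b := by linarith
    have hL2 : 0 < Real.log 2 := Real.log_pos one_lt_two
    have key := core_ineq a b hb0 hba
    have hcoreL : a * Real.logb 2 a + b * Real.logb 2 b + 2 * b ≤
        (a + b) * Real.logb 2 (a + b) := by
      have h2 := (div_le_div_iff_of_pos_right hL2).mpr key
      have e1 : (a * Real.log a + b * Real.log b + 2*b*Real.log 2)/Real.log 2
          = a * (Real.log a / Real.log 2) + b * (Real.log b / Real.log 2) + 2*b := by
        field_simp
      have e2 : ((a+b) * Real.log (a+b))/Real.log 2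
          = (a+b) * (Real.log (a+b) / Real.log 2) := by ring
      rw [e1, e2, Real.log_div_log, Real.log_div_log, Real.log_div_log] at h2
      exact h2
    rw [logb_two_pow_div n a ha, logb_two_pow_div n b hb0,
      logb_two_pow_div (n+1) (a+b) hab]
    push_cast
    nlinarith [hcoreL]

def E (n : ℕ) (A : Finset (Fin n → Bool)) : ℕ :=
  (((univ : Finset (Fin n → Bool)) ×ˢ (univ : Finset (Fin n → Bool))).filter
        (fun p => p.1 ∈ A ∧ p.2 ∉ A ∧
          (univ.filter fun i => p.1 i ≠ p.2 i).card = 1)).card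

lemma E_sum (n : ℕ) (A : Finset (Fin n → Bool)) :
    E n A = ∑ x : Fin n → Bool, ∑ y : Fin n → Bool,
      if x ∈ A ∧ y ∉ A ∧ (univ.filter fun i => x i ≠ y i).card = 1 then 1 else 0 := by
  rw [E, Finset.card_filter, Finset.sum_product]

lemma d_cons (n : ℕ) (b b' : Bool) (y y' : Fin n → Bool) :
    (univ.filter fun i : Fin (n+1) => (Fin.cons b y : Fin (n+1) → Bool) i ≠ (Fin.cons b' y' : Fin (n+1) → Bool) i).card
      = (if b ≠ b' then 1 else 0) + (univ.filter fun i : Fin n => y i ≠ y' i).card := by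
  rw [Finset.card_filter, Finset.card_filter, Fin.sum_univ_succ]
  simp [Fin.cons_succ, Fin.cons_zero]

lemma reindex {n : ℕ} {M : Type*} [AddCommMonoid M] (f : (Fin (n+1) → Bool) → M) :
    ∑ x, f x = ∑ p : Bool × (Fin n → Bool), f (Fin.cons p.1 p.2) :=
  ((Equiv.sum_comp (Fin.consEquiv fun _ => Bool) f).symm).trans
    (Finset.sum_congr rfl fun p _ => rfl)

lemma block_same (n : ℕ) (A : Finset (Fin (n+1) → Bool)) (c : Bool) :
    (∑ x : Fin n → Bool, ∑ y : Fin n → Bool,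
      if (Fin.cons c x : Fin (n+1) → Bool) ∈ A ∧ (Fin.cons c y : Fin (n+1) → Bool) ∉ A ∧
          (univ.filter fun i => ¬ x i = y i).card = 1 then 1 else 0)
      = E n (univ.filter fun y => (Fin.cons c y : Fin (n+1) → Bool) ∈ A) := by
  rw [E_sum]
  simp only [ne_eq, Finset.mem_filter, Finset.mem_univ, true_and]

lemma block_diff (n : ℕ) (A : Finset (Fin (n+1) → Bool)) (b b' : Bool) :
    (∑ x : Fin n → Bool, ∑ y : Fin n → Bool,
      if (Fin.cons b x : Fin (n+1) → Bool) ∈ A ∧ (Fin.cons b' y : Fin (n+1) → Bool) ∉ A ∧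
          (univ.filter fun i => ¬ x i = y i).card = 0 then 1 else 0)
      = (univ.filter fun y : Fin n → Bool => (Fin.cons b y : Fin (n+1) → Bool) ∈ A ∧
          (Fin.cons b' y : Fin (n+1) → Bool) ∉ A).card := by
  have hd : ∀ x y : Fin n → Bool, ((univ.filter fun i => ¬ x i = y i).card = 0) ↔ x = y := by
    intro x y
    rw [Finset.card_eq_zero, Finset.filter_eq_empty_iff]
    simp [funext_iff]
  rw [Finset.card_filter]
  refine Finset.sum_congr rfl fun x _ => ?_
  rw [Finset.sum_eq_single x]
  · simp [hd]
  · intro y _ hyx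
    rw [if_neg]
    rintro ⟨-, -, h⟩
    exact hyx ((hd x y).mp h).symm
  · intro h
    exact absurd (Finset.mem_univ x) h


lemma E_split (n : ℕ) (A : Finset (Fin (n+1) → Bool)) :
    E (n+1) A =
      E n (univ.filter fun y => (Fin.cons false y : Fin (n+1) → Bool) ∈ A) +
      E n (univ.filter fun y => (Fin.cons true y : Fin (n+1) → Bool) ∈ A) +
      (univ.filter fun y : Fin n → Bool => (Fin.cons false y : Fin (n+1) → Bool) ∈ A ∧
        (Fin.cons true y : Fin (n+1) → Bool) ∉ A).card +
      (univ.filter fun y : Fin n → Bool => (Fin.cons true y : Fin (n+1) → Bool) ∈ A ∧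
        (Fin.cons false y : Fin (n+1) → Bool) ∉ A).card := by
  classical
  rw [E_sum, reindex]
  simp only [reindex, Fintype.sum_prod_type, Fintype.sum_bool, d_cons]
  simp only [ne_eq, Bool.true_eq_false, Bool.false_eq_true, not_false_eq_true, not_true_eq_false,
    if_true, if_false, zero_add, Nat.add_eq_left]
  simp only [Finset.sum_add_distrib]
  rw [block_same, block_same, block_diff, block_diff]
  omega

lemma card_split (n : ℕ) (A : Finset (Fin (n+1) → Bool)) :
    A.card = (univ.filter fun y => (Fin.cons false y : Fin (n+1) → Bool) ∈ A).card +
      (univ.filter fun y => (Fin.cons true y : Fin (n+1) → Bool) ∈ A).card := by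
  classical
  rw [← Finset.filter_univ_mem A, Finset.card_filter, reindex, Fintype.sum_prod_type,
    Fintype.sum_bool, Finset.card_filter, Finset.card_filter]
  simp only [Finset.mem_filter, Finset.mem_univ, true_and]
  exact Nat.add_comm _ _

lemma cross_bound (n : ℕ) (A : Finset (Fin (n+1) → Bool)) (b b' : Bool) :
    (univ.filter fun y => (Fin.cons b y : Fin (n+1) → Bool) ∈ A).card ≤
      (univ.filter fun y : Fin n → Bool => (Fin.cons b y : Fin (n+1) → Bool) ∈ A ∧
        (Fin.cons b' y : Fin (n+1) → Bool) ∉ A).card +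
      (univ.filter fun y => (Fin.cons b' y : Fin (n+1) → Bool) ∈ A).card := by
  classical
  refine le_trans (Finset.card_le_card ?_) (Finset.card_union_le _ _)
  intro y hy
  simp only [Finset.mem_filter, Finset.mem_univ, true_and, Finset.mem_union] at *
  tauto

theorem aux : ∀ (n : ℕ) (A : Finset (Fin n → Bool)),
    (A.card : ℝ) * Real.logb 2 ((2 : ℝ) ^ n / (A.card : ℝ)) ≤ (E n A : ℝ) := by
  intro n
  induction n with
  | zero =>
    intro A
    have : A.card ≤ 1 := by
      have := Finset.card_le_univ A
      simpa using this
    interval_cases h : A.card <;> simp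
  | succ n ih =>
    intro A
    set Af := univ.filter fun y => (Fin.cons false y : Fin (n+1) → Bool) ∈ A with hAf
    set At := univ.filter fun y => (Fin.cons true y : Fin (n+1) → Bool) ∈ A with hAt
    set cf := (univ.filter fun y : Fin n → Bool => (Fin.cons false y : Fin (n+1) → Bool) ∈ A ∧
        (Fin.cons true y : Fin (n+1) → Bool) ∉ A).card with hcf
    set ct := (univ.filter fun y : Fin n → Bool => (Fin.cons true y : Fin (n+1) → Bool) ∈ A ∧
        (Fin.cons false y : Fin (n+1) → Bool) ∉ A).card with hct
    have hsplit := E_split n A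
    have hcard := card_split n A
    have h1 : Af.card ≤ cf + At.card := cross_bound n A false true
    have h2 : At.card ≤ ct + Af.card := cross_bound n A true false
    have ihf := ih Af
    have iht := ih At
    rw [hcard]
    push_cast
    rcases le_total At.card Af.card with hle | hle
    · have key := main_ineq n (Af.card : ℝ) (At.card : ℝ) (by positivity) (by exact_mod_cast hle)
      have hE : (E (n+1) A : ℝ) = (E n Af : ℝ) + (E n At : ℝ) + (cf : ℝ) + (ct : ℝ) := by
        exact_mod_cast congrArg (Nat.cast : ℕ → ℝ) hsplit
      have hc : (Af.card : ℝ) - (At.card : ℝ) ≤ (cf : ℝ) + (ct : ℝ) := by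
        have : (Af.card : ℝ) ≤ (cf : ℝ) + (At.card : ℝ) := by exact_mod_cast h1
        have hct0 : (0:ℝ) ≤ (ct : ℝ) := by positivity
        linarith
      push_cast at key
      linarith
    · have key := main_ineq n (At.card : ℝ) (Af.card : ℝ) (by positivity) (by exact_mod_cast hle)
      rw [add_comm ((At.card : ℝ)) ((Af.card : ℝ))] at key
      have hE : (E (n+1) A : ℝ) = (E n Af : ℝ) + (E n At : ℝ) + (cf : ℝ) + (ct : ℝ) := by
        exact_mod_cast congrArg (Nat.cast : ℕ → ℝ) hsplit
      have hc : (At.card : ℝ) - (Af.card : ℝ) ≤ (cf : ℝ) + (ct : ℝ) := by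
        have : (At.card : ℝ) ≤ (ct : ℝ) + (Af.card : ℝ) := by exact_mod_cast h2
        have hcf0 : (0:ℝ) ≤ (cf : ℝ) := by positivity
        linarith
      push_cast at key
      linarith

/-- Edge-isoperimetric inequality on the discrete cube: the edge boundary of a
nonempty set `A` (counted as ordered pairs `(a, b)` with `a ∈ A`, `b ∉ A`,
`a ∼ b`, which is in bijection with boundary edges) has size at least
`|A| · log₂(2^n / |A|)`. -/
theorem edge_isoperimetric (n : ℕ) (A : Finset (Fin n → Bool)) (hA : A.Nonempty) :
    ((((univ : Finset (Fin n → Bool)) ×ˢ (univ : Finset (Fin n → Bool))).filter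
        (fun p => p.1 ∈ A ∧ p.2 ∉ A ∧
          (univ.filter fun i => p.1 i ≠ p.2 i).card = 1)).card : ℝ) ≥
      (A.card : ℝ) * Real.logb 2 ((2 : ℝ) ^ n / (A.card : ℝ)) := by
  exact aux n A
end

section
/- Let g be a strictly positive real-valued function on a finite probability space satisfying E(1/g) · E(g) ≤ 1 + ε. Then E[(g − E g)²] ≤ ε · E(g) · ‖g‖_∞. -/
open Finset

/-- If a strictly positive function `g` on a finite probability space satisfies
`E(1/g)·E(g) ≤ 1 + ε`, then `E[(g - Eg)²] ≤ ε · E(g) · ‖g‖_∞`. -/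
theorem concentration_of_harmonic (Ω : Type) [Fintype Ω] [Nonempty Ω]
    (w : Ω → ℝ) (hw : ∀ x, 0 ≤ w x) (hw1 : ∑ x, w x = 1)
    (g : Ω → ℝ) (hg : ∀ x, 0 < g x) (ε : ℝ) (hε : 0 ≤ ε)
    (h : (∑ x, w x * (1 / g x)) * (∑ x, w x * g x) ≤ 1 + ε) :
    ∑ x, w x * (g x - ∑ y, w y * g y) ^ 2 ≤
      ε * (∑ x, w x * g x) * (univ.sup' univ_nonempty g) := by
  set μ := ∑ y, w y * g y with hμ
  set M := univ.sup' univ_nonempty g with hM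
  have hμ0 : 0 ≤ μ := Finset.sum_nonneg fun x _ => mul_nonneg (hw x) (hg x).le
  have hgM : ∀ x, g x ≤ M := fun x => Finset.le_sup' g (mem_univ x)
  have key : ∑ x, w x * ((g x - μ) ^ 2 / g x) ≤ ε * μ := by
    have expand : ∀ x : Ω, w x * ((g x - μ) ^ 2 / g x)
        = w x * g x - 2 * μ * w x + μ ^ 2 * (w x * (1 / g x)) := by
      intro x
      have := (hg x).ne'
      field_simp
      ring
    rw [Finset.sum_congr rfl (fun x _ => expand x), Finset.sum_add_distrib,
      Finset.sum_sub_distrib, ← Finset.mul_sum, ← Finset.mul_sum, hw1]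
    have h2 := mul_le_mul_of_nonneg_left h hμ0
    nlinarith [h2]
  calc ∑ x, w x * (g x - μ) ^ 2 ≤ ∑ x, M * (w x * ((g x - μ) ^ 2 / g x)) := by
        apply Finset.sum_le_sum
        intro x _
        have hgx := hg x
        have h1 : w x * (g x - μ) ^ 2 = w x * (g x * ((g x - μ) ^ 2 / g x)) := by
          field_simp
        rw [h1]
        have h3 : g x * ((g x - μ) ^ 2 / g x) ≤ M * ((g x - μ) ^ 2 / g x) :=
          mul_le_mul_of_nonneg_right (hgM x) (div_nonneg (sq_nonneg _) hgx.le)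
        calc w x * (g x * ((g x - μ) ^ 2 / g x))
            ≤ w x * (M * ((g x - μ) ^ 2 / g x)) :=
              mul_le_mul_of_nonneg_left h3 (hw x)
          _ = M * (w x * ((g x - μ) ^ 2 / g x)) := by ring
    _ = M * ∑ x, w x * ((g x - μ) ^ 2 / g x) := by rw [Finset.mul_sum]
    _ ≤ M * (ε * μ) := mul_le_mul_of_nonneg_left key
        (le_trans (hg (Classical.arbitrary Ω)).le (hgM _))
    _ = ε * μ * M := by ring
end

section
/- Let f be a real-valued function on {0,1}^n obtained from g by a downward shift in direction i: for each adjacent pair x,y with x_i = 0, y_i = 1, set f(x) = max{g(x),g(y)} and f(y) = min{g(x),g(y)}. Then E(f,f) ≤ E(g,g), where E(h,h) = E_x ∑_{y∼x}(h(x)−h(y))². -/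
/-!
Split the Dirichlet sum by edge direction. On edges in the shift direction `i` the shift only
reorders the two values, so those terms are unchanged. The edges in a direction `j ≠ i` pair up
into squares `x, flipCoord i x, flipCoord j x, flipCoord i (flipCoord j x)`, and on each square the
shift replaces the two `j`-edges `(a, c), (b, d)` by `(max a b, max c d), (min a b, min c d)`,
which by the rearrangement inequality does not increase the sum of squared differences.
-/

open Finset

lemma sq_max_sub_max_add_sq_min_sub_min_le {α : Type*} [Field α] [LinearOrder α]
    [IsStrictOrderedRing α] (a b c d : α) :
    (max a b - max c d) ^ 2 + (min a b - min c d) ^ 2 ≤ (a - c) ^ 2 + (b - d) ^ 2 := by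
  rcases le_total a b with hab | hab <;> rcases le_total c d with hcd | hcd <;>
    simp only [hab, hcd, max_eq_left, max_eq_right, min_eq_left, min_eq_right] <;>
    nlinarith [mul_nonneg (sub_nonneg.2 hab) (sub_nonneg.2 hcd)]

namespace Hypercube

variable {ι : Type*} [DecidableEq ι]

def flipCoord (j : ι) (x : ι → Bool) : ι → Bool := Function.update x j (!x j)

@[simp]
lemma flipCoord_apply_self (j : ι) (x : ι → Bool) : flipCoord j x j = !x j := by
  simp [flipCoord]

lemma flipCoord_apply_of_ne {j k : ι} (h : k ≠ j) (x : ι → Bool) : flipCoord j x k = x k :=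
  Function.update_of_ne h _ _

lemma flipCoord_involutive (j : ι) : Function.Involutive (flipCoord j) := by
  intro x
  ext k
  rcases eq_or_ne k j with rfl | hk
  · simp
  · rw [flipCoord_apply_of_ne hk, flipCoord_apply_of_ne hk]

lemma flipCoord_comm (j k : ι) (x : ι → Bool) :
    flipCoord j (flipCoord k x) = flipCoord k (flipCoord j x) := by
  ext l
  by_cases hj : l = j <;> by_cases hk : l = k <;>
    simp_all [flipCoord_apply_of_ne]

lemma flipCoord_left_injective (x : ι → Bool) : Function.Injective (flipCoord · x) := by
  intro j k h
  by_contra hjk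
  have := congrFun h j
  simp [flipCoord_apply_of_ne hjk] at this

lemma update_eq_flipCoord {j : ι} {x : ι → Bool} {b : Bool} (h : x j = !b) :
    Function.update x j b = flipCoord j x := by
  simp [flipCoord, h]

lemma hammingDist_eq_one_iff [Fintype ι] {x y : ι → Bool} :
    hammingDist x y = 1 ↔ ∃ j, flipCoord j x = y := by
  constructor
  · intro h
    obtain ⟨j, hj⟩ := card_eq_one.mp h
    have hdiff : ∀ k, x k ≠ y k ↔ k = j := fun k => by
      simpa using congrArg (k ∈ ·) hj
    refine ⟨j, funext fun k => ?_⟩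
    rcases eq_or_ne k j with rfl | hk
    · simpa [Bool.eq_not] using hdiff k
    · rw [flipCoord_apply_of_ne hk]
      simpa [hk] using hdiff k
  · rintro ⟨j, rfl⟩
    refine card_eq_one.mpr ⟨j, ext fun k => ?_⟩
    rcases eq_or_ne k j with rfl | hk
    · simp
    · simp [flipCoord_apply_of_ne hk, hk]

lemma sum_hammingDist_eq_one [Fintype ι] {M : Type*} [AddCommMonoid M] (F : (ι → Bool) → M)
    (x : ι → Bool) :
    ∑ y ∈ univ.filter (hammingDist x · = 1), F y = ∑ j, F (flipCoord j x) := by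
  have : univ.filter (hammingDist x · = 1) = univ.image (flipCoord · x) := by
    ext y
    simp [hammingDist_eq_one_iff]
  rw [this, sum_image fun j _ k _ h => flipCoord_left_injective x h]

lemma sum_comp_flipCoord [Fintype ι] {M : Type*} [AddCommMonoid M] (j : ι)
    (F : (ι → Bool) → M) : ∑ x, F (flipCoord j x) = ∑ x, F x :=
  Equiv.sum_comp (flipCoord_involutive j).toPerm F

variable {α : Type*} [LinearOrder α]

def downShift (i : ι) (g : (ι → Bool) → α) (x : ι → Bool) : α :=
  if x i then min (g (flipCoord i x)) (g x) else max (g x) (g (flipCoord i x))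

variable {i : ι} {g : (ι → Bool) → α} {x : ι → Bool}

lemma downShift_of_false (hx : x i = false) :
    downShift i g x = max (g x) (g (flipCoord i x)) := by
  simp [downShift, hx]

lemma downShift_flipCoord_of_false (hx : x i = false) :
    downShift i g (flipCoord i x) = min (g x) (g (flipCoord i x)) := by
  simp [downShift, hx, flipCoord_involutive i x]

variable [Field α] [IsStrictOrderedRing α]

lemma sq_downShift_sub_downShift_flipCoord (i : ι) (g : (ι → Bool) → α) (x : ι → Bool) :
    (downShift i g x - downShift i g (flipCoord i x)) ^ 2 = (g x - g (flipCoord i x)) ^ 2 := by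
  cases hx : x i
  · rw [downShift_of_false hx, downShift_flipCoord_of_false hx, max_sub_min_eq_abs', sq_abs]
  · obtain ⟨y, hy, rfl⟩ : ∃ y, y i = false ∧ flipCoord i y = x :=
      ⟨flipCoord i x, by simp [hx], flipCoord_involutive i x⟩
    rw [flipCoord_involutive i y, sub_sq_comm, sub_sq_comm (g _), downShift_of_false hy,
      downShift_flipCoord_of_false hy, max_sub_min_eq_abs', sq_abs]

lemma sq_downShift_sub_add_sq_downShift_sub_le {j : ι} (hji : j ≠ i) (hx : x i = false) :
    (downShift i g x - downShift i g (flipCoord j x)) ^ 2 +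
        (downShift i g (flipCoord i x) - downShift i g (flipCoord j (flipCoord i x))) ^ 2 ≤
      (g x - g (flipCoord j x)) ^ 2 +
        (g (flipCoord i x) - g (flipCoord j (flipCoord i x))) ^ 2 := by
  have hjx : flipCoord j x i = false := by rw [flipCoord_apply_of_ne hji.symm, hx]
  rw [flipCoord_comm j i, downShift_of_false hx, downShift_of_false hjx,
    downShift_flipCoord_of_false hx, downShift_flipCoord_of_false hjx]
  exact sq_max_sub_max_add_sq_min_sub_min_le _ _ _ _

lemma sum_sq_downShift_sub_flipCoord_le [Fintype ι] (i j : ι) (g : (ι → Bool) → α) :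
    ∑ x, (downShift i g x - downShift i g (flipCoord j x)) ^ 2 ≤
      ∑ x, (g x - g (flipCoord j x)) ^ 2 := by
  rcases eq_or_ne j i with rfl | hji
  · exact (sum_congr rfl fun x _ => sq_downShift_sub_downShift_flipCoord j g x).le
  -- Count every `j`-edge twice, once together with its partner in the square across `i`.
  set E := fun (h : (ι → Bool) → α) x => (h x - h (flipCoord j x)) ^ 2
  have sum_pairs : ∀ h, 2 * ∑ x, E h x = ∑ x, (E h x + E h (flipCoord i x)) := fun h => by
    rw [sum_add_distrib, sum_comp_flipCoord i (E h), two_mul]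
  have pair_le : ∀ x, E (downShift i g) x + E (downShift i g) (flipCoord i x) ≤
      E g x + E g (flipCoord i x) := by
    intro x
    cases hx : x i
    · exact sq_downShift_sub_add_sq_downShift_sub_le hji hx
    · have := sq_downShift_sub_add_sq_downShift_sub_le (g := g) hji (x := flipCoord i x)
        (by simp [hx])
      rw [flipCoord_involutive i x] at this
      simp only [E]
      linarith
  have := sum_le_sum (s := univ) fun x _ => pair_le x
  rw [← sum_pairs, ← sum_pairs] at this
  exact le_of_mul_le_mul_left this two_pos

end Hypercube

open Hypercube

/-- A downward shift in direction `i` does not increase the Dirichlet form: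
if `f` puts, on each edge in direction `i`, the larger of the two values of `g` on the
endpoint with `i`-th coordinate `0`, then `E(f,f) ≤ E(g,g)`. -/
theorem shift_decreases_dirichlet (n : ℕ) (i : Fin n) (g f : (Fin n → Bool) → ℝ)
    (hf : ∀ x : Fin n → Bool,
      (x i = false → f x = max (g x) (g (Function.update x i true))) ∧
      (x i = true → f x = min (g (Function.update x i false)) (g x))) :
    (1 / (2 : ℝ) ^ n) *
        ∑ x : Fin n → Bool, ∑ y ∈ univ.filter
            (fun y => (univ.filter fun j => x j ≠ y j).card = 1), (f x - f y) ^ 2 ≤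
      (1 / (2 : ℝ) ^ n) *
        ∑ x : Fin n → Bool, ∑ y ∈ univ.filter
            (fun y => (univ.filter fun j => x j ≠ y j).card = 1), (g x - g y) ^ 2 := by
  obtain rfl : f = downShift i g := by
    ext x
    cases hx : x i <;> simp [downShift, hx, hf x, update_eq_flipCoord]
  refine mul_le_mul_of_nonneg_left ?_ (by positivity)
  simp only [← hammingDist.eq_def, sum_hammingDist_eq_one]
  rw [sum_comm, sum_comm (s := (univ : Finset (Fin n → Bool)))]
  exact sum_le_sum fun j _ => sum_sq_downShift_sub_flipCoord_le i j g
end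

section
/- Applying the downward shift operations in directions i = 1, 2, ..., n consecutively to any real-valued function on {0,1}^n produces a downwards monotone function, i.e., a function h with h(x) ≥ h(y) whenever x ⪯ y coordinatewise. -/
/-- The downward shift of `g` in direction `i`: on each edge in direction `i`, the larger
value goes to the endpoint with `i`-th coordinate `0` (i.e. `false`). -/
def shift (n : ℕ) (i : Fin n) (g : (Fin n → Bool) → ℝ) : (Fin n → Bool) → ℝ :=
  fun x =>
    if x i = false then max (g x) (g (Function.update x i true))
    else min (g x) (g (Function.update x i false))

/-- `f` is monotone (downwards) in direction `i`. -/
def MonoDir (n : ℕ) (i : Fin n) (f : (Fin n → Bool) → ℝ) : Prop :=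
  ∀ x, f (Function.update x i true) ≤ f (Function.update x i false)

lemma monoDir_shift (n : ℕ) (i : Fin n) (g : (Fin n → Bool) → ℝ) :
    MonoDir n i (shift n i g) := by
  intro x
  simp only [shift, Function.update_self, Function.update_idem]
  rw [if_pos trivial]
  exact (min_le_right _ _).trans (le_max_left _ _)

lemma monoDir_shift_preserve (n : ℕ) (i j : Fin n) (f : (Fin n → Bool) → ℝ)
    (hf : MonoDir n i f) : MonoDir n i (shift n j f) := by
  by_cases hij : j = i
  · subst hij; exact monoDir_shift n j f
  · intro x
    have hcomm : ∀ (b c : Bool),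
        Function.update (Function.update x i b) j c
          = Function.update (Function.update x j c) i b := by
      intro b c
      exact Function.update_comm (Ne.symm hij) _ _ _
    simp only [shift, Function.update_of_ne hij, hcomm]
    cases hxj : x j
    · rw [if_pos rfl, if_pos rfl]
      exact max_le_max (hf x) (hf (Function.update x j true))
    · rw [if_neg (by simp), if_neg (by simp)]
      exact min_le_min (hf x) (hf (Function.update x j false))

lemma monoDir_foldl (n : ℕ) (i : Fin n) (l : List (Fin n)) :
    ∀ f : (Fin n → Bool) → ℝ, MonoDir n i f →
      MonoDir n i (l.foldl (fun f k => shift n k f) f) := by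
  induction l with
  | nil => intro f hf; exact hf
  | cons a t ih =>
      intro f hf
      exact ih _ (monoDir_shift_preserve n i a f hf)

lemma monoDir_foldl_mem (n : ℕ) (i : Fin n) (l : List (Fin n)) (hi : i ∈ l) :
    ∀ f : (Fin n → Bool) → ℝ, MonoDir n i (l.foldl (fun f k => shift n k f) f) := by
  induction l with
  | nil => cases hi
  | cons a t ih =>
      intro f
      rcases List.mem_cons.mp hi with h | h
      · subst h
        exact monoDir_foldl n i t _ (monoDir_shift n i f)
      · exact ih h _

lemma mono_of_monoDir (n : ℕ) (h : (Fin n → Bool) → ℝ)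
    (hm : ∀ i, MonoDir n i h) :
    ∀ (k : ℕ) (y x : Fin n → Bool),
      (Finset.univ.filter fun j => x j ≠ y j).card = k →
      (∀ j, x j ≤ y j) → h y ≤ h x := by
  intro k
  induction k using Nat.strong_induction_on with
  | _ k ih =>
    intro y x hcard hle
    by_cases hxy : x = y
    · subst hxy; exact le_refl _
    · obtain ⟨j, hj⟩ : ∃ j, x j ≠ y j := Function.ne_iff.mp hxy
      have hxj : x j = false ∧ y j = true := by
        have := hle j
        revert this hj
        cases x j <;> cases y j <;> simp
      set y' := Function.update y j false with hy'
      have h1 : h y ≤ h y' := by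
        have := hm j y'
        rwa [hy', Function.update_idem, Function.update_idem,
          show Function.update y j true = y from by
            rw [← hxj.2]; exact Function.update_eq_self j y] at this
      have hle' : ∀ j', x j' ≤ y' j' := by
        intro j'
        by_cases hjj : j' = j
        · subst hjj
          simp [hy', hxj.1]
        · rw [hy', Function.update_of_ne hjj]
          exact hle j'
      have hset : (Finset.univ.filter fun j' => x j' ≠ y' j')
          = (Finset.univ.filter fun j' => x j' ≠ y j').erase j := by
        ext j'
        simp only [Finset.mem_erase, Finset.mem_filter, Finset.mem_univ, true_and]
        by_cases hjj : j' = j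
        · subst hjj
          simp [hy', hxj.1]
        · rw [hy', Function.update_of_ne hjj]
          tauto
      have hlt : (Finset.univ.filter fun j' => x j' ≠ y' j').card < k := by
        rw [hset, ← hcard]
        exact Finset.card_erase_lt_of_mem (by simp [hj])
      exact le_trans h1 (ih _ hlt y' x rfl hle')

/-- Applying the downward shifts in directions `1, …, n` consecutively to any function on
the cube produces a downwards monotone function. -/
theorem shifts_produce_monotone (n : ℕ) (g : (Fin n → Bool) → ℝ) :
    ∀ x y : Fin n → Bool, (∀ j, x j ≤ y j) →
      ((List.finRange n).foldl (fun f i => shift n i f) g) y ≤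
        ((List.finRange n).foldl (fun f i => shift n i f) g) x := by
  intro x y hle
  exact mono_of_monoDir n _
    (fun i => monoDir_foldl_mem n i (List.finRange n) (List.mem_finRange i) g)
    _ y x rfl hle
end

section
/- For real x, y with 1 ≤ y < x ≤ 2^{n−1} and f(t) = (1/t)log₂(2^{n−1}/t), one has 2x·f(x)·f(y) + 2(f(x)+f(y)) ≥ x·f((x+y)/2)·(f(x)+f(y)) + 4·f((x+y)/2). -/
lemma aux_log_one_add (v : ℝ) (h0 : 0 ≤ v) (h1 : v ≤ 1/2) :
    v - v^2/2 + v^3/3 - v^4/4 + v^5/5 - 2*v^6 ≤ Real.log (1+v) := by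
  have habs : |(-v)| < 1 := by rw [abs_neg, abs_of_nonneg h0]; linarith
  have h := Real.abs_log_sub_add_sum_range_le habs 5
  rw [abs_neg, abs_of_nonneg h0] at h
  simp [Finset.sum_range_succ] at h
  rw [abs_le] at h
  have h2 := h.1
  have hden : (0:ℝ) < 1 - v := by linarith
  have herr : v^6/(1-v) ≤ 2*v^6 := by
    rw [div_le_iff₀ hden]; nlinarith [pow_nonneg h0 6]
  nlinarith [h2, herr]

lemma aux_log_one_sub_lb (w : ℝ) (h0 : 0 ≤ w) (h1 : w ≤ 1/2) :
    w + w^2/2 + w^3/3 - 2*w^4 ≤ -Real.log (1-w) := by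
  have habs : |w| < 1 := by rw [abs_of_nonneg h0]; linarith
  have h := Real.abs_log_sub_add_sum_range_le habs 3
  rw [abs_of_nonneg h0] at h
  simp [Finset.sum_range_succ] at h
  rw [abs_le] at h
  have h2 := h.2
  have hden : (0:ℝ) < 1 - w := by linarith
  have herr : w^4/(1-w) ≤ 2*w^4 := by
    rw [div_le_iff₀ hden]; nlinarith [pow_nonneg h0 4]
  nlinarith [h2, herr]

lemma aux_log_one_sub_ub (z : ℝ) (h0 : 0 ≤ z) (h1 : z ≤ 1/4) :
    -Real.log (1-z) ≤ z + z^2/2 + z^3/3 + (4/3)*z^4 := by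
  have habs : |z| < 1 := by rw [abs_of_nonneg h0]; linarith
  have h := Real.abs_log_sub_add_sum_range_le habs 3
  rw [abs_of_nonneg h0] at h
  simp [Finset.sum_range_succ] at h
  rw [abs_le] at h
  have h2 := h.1
  have hden : (0:ℝ) < 1 - z := by linarith
  have herr : z^4/(1-z) ≤ (4/3)*z^4 := by
    rw [div_le_iff₀ hden]; nlinarith [pow_nonneg h0 4]
  nlinarith [h2, herr]

set_option maxHeartbeats 2000000 in
lemma claim1_v (v : ℝ) (h0 : 0 < v) (h1 : v ≤ 1) :
    0 ≤ Real.log 2 * (1-v)^2 - v * Real.log v - (1+v) * (Real.log 2 - Real.log (1+v)) := by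
  have hl := Real.log_two_gt_d9
  have hu := Real.log_two_lt_d9
  rcases le_or_gt v (1/2) with h2 | h2
  · have hlog2v : Real.log (2*v) ≤ 2*v - 1 := Real.log_le_sub_one_of_pos (by linarith)
    have hlogv : Real.log v = Real.log (2*v) - Real.log 2 := by
      rw [Real.log_mul two_ne_zero (ne_of_gt h0)]; ring
    have hLa : Real.log v ≤ 2*v - 1 - Real.log 2 := by linarith
    have hP := aux_log_one_add v h0.le h2
    have h3 : v * Real.log v ≤ v * (2*v - 1 - Real.log 2) :=
      mul_le_mul_of_nonneg_left hLa h0.le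
    have h4 : (1+v) * (v - v^2/2 + v^3/3 - v^4/4 + v^5/5 - 2*v^6) ≤ (1+v) * Real.log (1+v) :=
      mul_le_mul_of_nonneg_left hP (by linarith)
    nlinarith [h3, h4, mul_pos h0 h0, mul_nonneg (mul_nonneg h0.le h0.le) h0.le,
      mul_nonneg (mul_nonneg (mul_nonneg h0.le h0.le) h0.le) h0.le,
      mul_nonneg h0.le (sub_nonneg.mpr h2),
      mul_nonneg (mul_nonneg h0.le h0.le) (sub_nonneg.mpr h2),
      mul_nonneg (mul_nonneg (mul_nonneg h0.le h0.le) h0.le) (sub_nonneg.mpr h2),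
      mul_nonneg (mul_nonneg (mul_nonneg (mul_nonneg h0.le h0.le) h0.le) h0.le) (sub_nonneg.mpr h2),
      mul_nonneg (mul_nonneg (mul_nonneg (mul_nonneg (mul_nonneg h0.le h0.le) h0.le) h0.le) h0.le) (sub_nonneg.mpr h2)]
  · have hu0 : (0:ℝ) ≤ 1 - v := by linarith
    have hu1 : 1 - v ≤ 1/2 := by linarith
    have hLa := aux_log_one_sub_lb (1-v) hu0 hu1
    rw [show (1:ℝ) - (1-v) = v by ring] at hLa
    have hLb := aux_log_one_sub_ub ((1-v)/2) (by linarith) (by linarith)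
    rw [show (1:ℝ) - (1-v)/2 = (1+v)/2 by ring] at hLb
    have h1v : Real.log (1+v) = Real.log 2 + Real.log ((1+v)/2) := by
      rw [← Real.log_mul two_ne_zero (by positivity)]; congr 1; ring
    rw [h1v]
    have h3 : v * ((1-v) + (1-v)^2/2 + (1-v)^3/3 - 2*(1-v)^4) ≤ v * (-Real.log v) :=
      mul_le_mul_of_nonneg_left hLa h0.le
    have h4 : (1+v) * (-Real.log ((1+v)/2)) ≤
        (1+v) * ((1-v)/2 + ((1-v)/2)^2/2 + ((1-v)/2)^3/3 + (4/3)*((1-v)/2)^4) :=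
      mul_le_mul_of_nonneg_left hLb (by linarith)
    nlinarith [h3, h4, sq_nonneg (1-v), mul_nonneg (mul_nonneg hu0 hu0) hu0,
      mul_nonneg (mul_nonneg (mul_nonneg hu0 hu0) hu0) hu0,
      mul_nonneg (mul_nonneg hu0 hu0) (by linarith : (0:ℝ) ≤ v - 1/2),
      mul_nonneg (mul_nonneg (mul_nonneg hu0 hu0) hu0) (by linarith : (0:ℝ) ≤ v - 1/2),
      mul_nonneg (mul_nonneg (mul_nonneg (mul_nonneg hu0 hu0) hu0) hu0) (by linarith : (0:ℝ) ≤ v - 1/2)]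


set_option maxHeartbeats 2000000 in
lemma claim2_v (v : ℝ) (h0 : 0 < v) (h1 : v ≤ 1) :
    0 ≤ (-Real.log v) * (Real.log 2 * v + Real.log (1+v))
        - 4*v*Real.log 2*(Real.log 2 - Real.log (1+v)) := by
  have hl := Real.log_two_gt_d9
  have hu := Real.log_two_lt_d9
  have hlogv0 : Real.log v ≤ 0 := Real.log_nonpos h0.le h1
  rcases le_or_gt v (1/2) with h2 | h2
  · have h12 : (0:ℝ) ≤ 1 - 2*v := by linarith
    have hlog2v : Real.log (2*v) ≤ 2*v - 1 := Real.log_le_sub_one_of_pos (by linarith)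
    have hlogv : Real.log v = Real.log (2*v) - Real.log 2 := by
      rw [Real.log_mul two_ne_zero (ne_of_gt h0)]; ring
    have hLa : Real.log 2 + 1 - 2*v ≤ -Real.log v := by linarith
    have hP := aux_log_one_add v h0.le h2
    have hP0 : 0 ≤ v - v^2/2 + v^3/3 - v^4/4 + v^5/5 - 2*v^6 := by
      nlinarith [mul_nonneg (pow_nonneg h0.le 1) (pow_nonneg h12 5),
        mul_nonneg (pow_nonneg h0.le 2) (pow_nonneg h12 4),
        mul_nonneg (pow_nonneg h0.le 3) (pow_nonneg h12 3),
        mul_nonneg (pow_nonneg h0.le 4) (pow_nonneg h12 2),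
        mul_nonneg (pow_nonneg h0.le 5) (pow_nonneg h12 1),
        pow_nonneg h0.le 6]
    have hA0 : (0:ℝ) ≤ Real.log 2 + 1 - 2*v := by linarith
    have hB0 : (0:ℝ) ≤ Real.log 2 * v + (v - v^2/2 + v^3/3 - v^4/4 + v^5/5 - 2*v^6) := by
      nlinarith [hP0, h0.le]
    have hprod : (Real.log 2 + 1 - 2*v) * (Real.log 2 * v + (v - v^2/2 + v^3/3 - v^4/4 + v^5/5 - 2*v^6))
        ≤ (-Real.log v) * (Real.log 2 * v + Real.log (1+v)) :=
      mul_le_mul hLa (by linarith) hB0 (by linarith)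
    have h4vl : (0:ℝ) ≤ 4*v*Real.log 2 := by positivity
    have hterm : 4*v*Real.log 2*(Real.log 2 - Real.log (1+v))
        ≤ 4*v*Real.log 2*(Real.log 2 - (v - v^2/2 + v^3/3 - v^4/4 + v^5/5 - 2*v^6)) :=
      mul_le_mul_of_nonneg_left (by linarith) h4vl
    have hM0 : 0 ≤ (v - v^2/2 + v^3/3 - v^4/4 + v^5/5 - 2*v^6)*(1+4*v) + v*(1-2*v) := by
      nlinarith [hP0, mul_nonneg h0.le h12, mul_nonneg hP0 h0.le]
    have hsq : (Real.log 2)^2 ≤ (0.6931471808:ℝ)^2 := by nlinarith [hl, hu]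
    have c1 : -3*v*(Real.log 2)^2 ≥ -3*v*((0.6931471808:ℝ)^2) := by nlinarith [mul_nonneg h0.le (sub_nonneg.mpr hsq)]
    have c2 : (0.6931471803:ℝ) * ((v - v^2/2 + v^3/3 - v^4/4 + v^5/5 - 2*v^6)*(1+4*v) + v*(1-2*v))
        ≤ Real.log 2 * ((v - v^2/2 + v^3/3 - v^4/4 + v^5/5 - 2*v^6)*(1+4*v) + v*(1-2*v)) :=
      mul_le_mul_of_nonneg_right hl.le hM0
    have c3 : 0 ≤ -3*v*((0.6931471808:ℝ)^2)
        + (0.6931471803:ℝ) * ((v - v^2/2 + v^3/3 - v^4/4 + v^5/5 - 2*v^6)*(1+4*v) + v*(1-2*v))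
        + (1-2*v)*(v - v^2/2 + v^3/3 - v^4/4 + v^5/5 - 2*v^6) := by
      nlinarith [mul_nonneg (pow_nonneg h0.le 1) (pow_nonneg h12 6),
        mul_nonneg (pow_nonneg h0.le 2) (pow_nonneg h12 5),
        mul_nonneg (pow_nonneg h0.le 3) (pow_nonneg h12 4),
        mul_nonneg (pow_nonneg h0.le 4) (pow_nonneg h12 3),
        mul_nonneg (pow_nonneg h0.le 5) (pow_nonneg h12 2),
        mul_nonneg (pow_nonneg h0.le 6) (pow_nonneg h12 1),
        pow_nonneg h0.le 7]
    have key : 0 ≤ (Real.log 2 + 1 - 2*v) * (Real.log 2 * v + (v - v^2/2 + v^3/3 - v^4/4 + v^5/5 - 2*v^6))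
        - 4*v*Real.log 2*(Real.log 2 - (v - v^2/2 + v^3/3 - v^4/4 + v^5/5 - 2*v^6)) := by
      nlinarith [c1, c2, c3]
    linarith [hprod, hterm, key]
  · have hu0 : (0:ℝ) ≤ 1 - v := by linarith
    have h21 : (0:ℝ) ≤ 2*v - 1 := by linarith
    have hu1 : 1 - v ≤ 1/2 := by linarith
    have hLa := aux_log_one_sub_lb (1-v) hu0 hu1
    rw [show (1:ℝ) - (1-v) = v by ring] at hLa
    have hLb := aux_log_one_sub_ub ((1-v)/2) (by linarith) (by linarith)
    rw [show (1:ℝ) - (1-v)/2 = (1+v)/2 by ring] at hLb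
    have h1v : Real.log (1+v) = Real.log 2 + Real.log ((1+v)/2) := by
      rw [← Real.log_mul two_ne_zero (by positivity)]; congr 1; ring
    rw [h1v]
    have hLb0 : Real.log ((1+v)/2) ≤ 0 := Real.log_nonpos (by linarith) (by linarith)
    have hS0 : 0 ≤ (1-v) + (1-v)^2/2 + (1-v)^3/3 - 2*(1-v)^4 := by
      nlinarith [mul_nonneg (pow_nonneg hu0 1) (pow_nonneg h21 3),
        mul_nonneg (pow_nonneg hu0 2) (pow_nonneg h21 2),
        mul_nonneg (pow_nonneg hu0 3) (pow_nonneg h21 1),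
        pow_nonneg hu0 4]
    have hfac : 0 ≤ Real.log 2 * (1+v)
        - ((1-v)/2 + ((1-v)/2)^2/2 + ((1-v)/2)^3/3 + (4/3)*((1-v)/2)^4) := by
      nlinarith [hl, mul_nonneg (pow_nonneg hu0 1) (pow_nonneg h21 3),
        mul_nonneg (pow_nonneg hu0 2) (pow_nonneg h21 2),
        mul_nonneg (pow_nonneg hu0 3) (pow_nonneg h21 1),
        pow_nonneg hu0 4, pow_nonneg h21 4]
    have hprod : ((1-v) + (1-v)^2/2 + (1-v)^3/3 - 2*(1-v)^4) * (Real.log 2 * (1+v)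
          - ((1-v)/2 + ((1-v)/2)^2/2 + ((1-v)/2)^3/3 + (4/3)*((1-v)/2)^4)) ≤
        (-Real.log v) * (Real.log 2 * v + (Real.log 2 + Real.log ((1+v)/2))) :=
      mul_le_mul hLa (by linarith) hfac (by linarith)
    have h4vl : (0:ℝ) ≤ 4*v*Real.log 2 := by positivity
    have hterm : 4*v*Real.log 2*(Real.log 2 - (Real.log 2 + Real.log ((1+v)/2)))
        ≤ 4*v*Real.log 2*((1-v)/2 + ((1-v)/2)^2/2 + ((1-v)/2)^3/3 + (4/3)*((1-v)/2)^4) :=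
      mul_le_mul_of_nonneg_left (by linarith) h4vl
    have hB : 0 ≤ ((1-v) + (1-v)^2/2 + (1-v)^3/3 - 2*(1-v)^4) * (1+v)
        - 4*v*((1-v)/2 + ((1-v)/2)^2/2 + ((1-v)/2)^3/3 + (4/3)*((1-v)/2)^4) := by
      nlinarith [mul_nonneg (pow_nonneg hu0 2) (pow_nonneg h21 3),
        mul_nonneg (pow_nonneg hu0 3) (pow_nonneg h21 2),
        mul_nonneg (pow_nonneg hu0 4) (pow_nonneg h21 1),
        pow_nonneg hu0 5]
    have c2 : (0.6931471803:ℝ) * (((1-v) + (1-v)^2/2 + (1-v)^3/3 - 2*(1-v)^4) * (1+v)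
          - 4*v*((1-v)/2 + ((1-v)/2)^2/2 + ((1-v)/2)^3/3 + (4/3)*((1-v)/2)^4))
        ≤ Real.log 2 * (((1-v) + (1-v)^2/2 + (1-v)^3/3 - 2*(1-v)^4) * (1+v)
          - 4*v*((1-v)/2 + ((1-v)/2)^2/2 + ((1-v)/2)^3/3 + (4/3)*((1-v)/2)^4)) :=
      mul_le_mul_of_nonneg_right hl.le hB
    have c3 : 0 ≤ (0.6931471803:ℝ) * (((1-v) + (1-v)^2/2 + (1-v)^3/3 - 2*(1-v)^4) * (1+v)
          - 4*v*((1-v)/2 + ((1-v)/2)^2/2 + ((1-v)/2)^3/3 + (4/3)*((1-v)/2)^4))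
        - ((1-v) + (1-v)^2/2 + (1-v)^3/3 - 2*(1-v)^4)
          * ((1-v)/2 + ((1-v)/2)^2/2 + ((1-v)/2)^3/3 + (4/3)*((1-v)/2)^4) := by
      nlinarith [mul_nonneg (pow_nonneg hu0 2) (pow_nonneg h21 6),
        mul_nonneg (pow_nonneg hu0 3) (pow_nonneg h21 5),
        mul_nonneg (pow_nonneg hu0 4) (pow_nonneg h21 4),
        mul_nonneg (pow_nonneg hu0 5) (pow_nonneg h21 3),
        mul_nonneg (pow_nonneg hu0 6) (pow_nonneg h21 2),
        mul_nonneg (pow_nonneg hu0 7) (pow_nonneg h21 1),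
        pow_nonneg hu0 8]
    have key : 0 ≤ ((1-v) + (1-v)^2/2 + (1-v)^3/3 - 2*(1-v)^4) * (Real.log 2 * (1+v)
          - ((1-v)/2 + ((1-v)/2)^2/2 + ((1-v)/2)^3/3 + (4/3)*((1-v)/2)^4))
        - 4*v*Real.log 2*((1-v)/2 + ((1-v)/2)^2/2 + ((1-v)/2)^3/3 + (4/3)*((1-v)/2)^4) := by
      nlinarith [c2, c3]
    linarith [hprod, hterm, key]

set_option maxHeartbeats 1000000 in
/-- Technical inequality: with `f(t) = (1/t)·log₂(2^{n-1}/t)` and `1 ≤ y < x ≤ 2^{n-1}`,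
`2x·f(x)·f(y) + 2(f(x)+f(y)) ≥ x·f((x+y)/2)·(f(x)+f(y)) + 4·f((x+y)/2)`. -/
theorem technical_main_ineq (n : ℕ) (hn : 2 ≤ n) (x y : ℝ)
    (hy : 1 ≤ y) (hxy : y < x) (hx : x ≤ (2 : ℝ) ^ (n - 1)) :
    2 * x * ((1 / x) * Real.logb 2 ((2 : ℝ) ^ (n - 1) / x)) *
          ((1 / y) * Real.logb 2 ((2 : ℝ) ^ (n - 1) / y)) +
        2 * ((1 / x) * Real.logb 2 ((2 : ℝ) ^ (n - 1) / x) +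
          (1 / y) * Real.logb 2 ((2 : ℝ) ^ (n - 1) / y)) ≥
      x * ((1 / ((x + y) / 2)) * Real.logb 2 ((2 : ℝ) ^ (n - 1) / ((x + y) / 2))) *
          ((1 / x) * Real.logb 2 ((2 : ℝ) ^ (n - 1) / x) +
            (1 / y) * Real.logb 2 ((2 : ℝ) ^ (n - 1) / y)) +
        4 * ((1 / ((x + y) / 2)) * Real.logb 2 ((2 : ℝ) ^ (n - 1) / ((x + y) / 2))) := by
  have hy0 : (0:ℝ) < y := by linarith
  have hx0 : (0:ℝ) < x := by linarith
  have hxy0 : (0:ℝ) < x + y := by linarith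
  have hℓ : (0:ℝ) < Real.log 2 := Real.log_pos one_lt_two
  set N : ℝ := (2:ℝ)^(n-1) with hNdef
  have hN0 : (0:ℝ) < N := by positivity
  set p : ℝ := Real.logb 2 (N/x) with hpdef
  set q : ℝ := Real.logb 2 (N/y) with hqdef
  set r : ℝ := Real.logb 2 (N/((x+y)/2)) with hrdef
  have hp : 0 ≤ p := Real.logb_nonneg one_lt_two (by rw [le_div_iff₀ hx0]; linarith)
  have ep : p = (Real.log N - Real.log x)/Real.log 2 := by
    rw [hpdef, Real.logb, Real.log_div (ne_of_gt hN0) (ne_of_gt hx0)]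
  have eq' : q = (Real.log N - Real.log y)/Real.log 2 := by
    rw [hqdef, Real.logb, Real.log_div (ne_of_gt hN0) (ne_of_gt hy0)]
  have er : r = (Real.log N - (Real.log (x+y) - Real.log 2))/Real.log 2 := by
    rw [hrdef, Real.logb, Real.log_div (ne_of_gt hN0) (by positivity),
      Real.log_div (ne_of_gt hxy0) two_ne_zero]
  have hpl : 0 ≤ Real.log N - Real.log x :=
    sub_nonneg.mpr (Real.log_le_log hx0 hx)
  have hv0 : 0 < y/x := by positivity
  have hv1 : y/x ≤ 1 := by rw [div_le_one hx0]; linarith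
  have C1 := claim1_v (y/x) hv0 hv1
  have C2 := claim2_v (y/x) hv0 hv1
  have e1 : Real.log (y/x) = Real.log y - Real.log x :=
    Real.log_div (ne_of_gt hy0) (ne_of_gt hx0)
  have e2 : Real.log (1+y/x) = Real.log (x+y) - Real.log x := by
    rw [show 1 + y/x = (x+y)/x by field_simp]
    exact Real.log_div (ne_of_gt hxy0) (ne_of_gt hx0)
  rw [e1, e2] at C1 C2
  set D : ℝ := (x+y)*(p*y+q*x) + x*(x+y)*(p*q) - r*(x*(p*y+q*x)+4*x*y) with hDdef
  have master : D * (Real.log 2)^2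
      = (Real.log N - Real.log x) * (x^2 *
          (Real.log 2 * (1-y/x)^2 - (y/x) * (Real.log y - Real.log x)
            - (1+y/x) * (Real.log 2 - (Real.log (x+y) - Real.log x))))
        + x^2 * ((-(Real.log y - Real.log x)) * (Real.log 2 * (y/x) + (Real.log (x+y) - Real.log x))
            - 4*(y/x)*Real.log 2*(Real.log 2 - (Real.log (x+y) - Real.log x))) := by
    rw [hDdef, ep, eq', er]
    field_simp
    ring
  have hD : 0 ≤ D := by
    have h1 : 0 ≤ D * (Real.log 2)^2 := by
      rw [master]
      have t1 : 0 ≤ (Real.log N - Real.log x) * (x^2 *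
          (Real.log 2 * (1-y/x)^2 - (y/x) * (Real.log y - Real.log x)
            - (1+y/x) * (Real.log 2 - (Real.log (x+y) - Real.log x)))) :=
        mul_nonneg hpl (mul_nonneg (sq_nonneg x) C1)
      have t2 : 0 ≤ x^2 * ((-(Real.log y - Real.log x)) * (Real.log 2 * (y/x) + (Real.log (x+y) - Real.log x))
            - 4*(y/x)*Real.log 2*(Real.log 2 - (Real.log (x+y) - Real.log x))) :=
        mul_nonneg (sq_nonneg x) C2
      linarith
    nlinarith [h1, mul_pos hℓ hℓ]
  rw [ge_iff_le, ← sub_nonneg]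
  have expand : 2 * x * ((1 / x) * p) * ((1 / y) * q) + 2 * ((1 / x) * p + (1 / y) * q)
      - (x * ((1 / ((x + y) / 2)) * r) * ((1 / x) * p + (1 / y) * q) + 4 * ((1 / ((x + y) / 2)) * r))
      = D * (2/(x*y*(x+y))) := by
    rw [hDdef]; field_simp; ring
  rw [expand]
  have : (0:ℝ) < 2/(x*y*(x+y)) := by positivity
  exact mul_nonneg hD this.le
end

section
/- For 0 < β < 1, the inequality β·log₂(1/β) + (1−β)² ≥ (1+β)·log₂(2/(1+β)) holds. -/
/-!
After multiplying by `log 2` the inequality reads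
`(1 + β) (log 2 - log (1 + β)) ≤ -β log β + (1 - β)² log 2`.
For `β ≤ 1/4` the crude bounds `-log β ≥ 2 log 2`, `(1 + β) log (1 + β) ≥ β` and `log 2 < 1`
suffice. For `β > 1/4` put `t = 1 - β < 3/4`: the Mercator series gives
`-log β = -log (1 - t) ≥ t + t²/2 + t³/3`, and `log 2 - log (1 + β) = -log (1 - t/2)` is at most
its second partial sum plus the geometric remainder. What is left is the polynomial inequality
`t² (log 2 - 1/4 - 7t/24 - t²/3) ≥ 0`, true for `t < 3/4` since `log 2 > 0.69`.
-/

open Real Finset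

lemma sum_range_pow_div_le_neg_log_one_sub {x : ℝ} (hx₀ : 0 ≤ x) (hx₁ : x < 1) (n : ℕ) :
    ∑ i ∈ range n, x ^ (i + 1) / (i + 1) ≤ -log (1 - x) :=
  sum_le_hasSum _ (fun _ _ ↦ by positivity)
    (hasSum_pow_div_log_of_abs_lt_one (by rwa [abs_of_nonneg hx₀]))

lemma neg_log_one_sub_le_sum_range_pow_div_add {x : ℝ} (hx : |x| < 1) (n : ℕ) :
    -log (1 - x) ≤ ∑ i ∈ range n, x ^ (i + 1) / (i + 1) + |x| ^ (n + 1) / (1 - |x|) := by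
  linarith [(abs_le.1 (abs_log_sub_add_sum_range_le hx n)).1]

lemma beta_log_ineq_of_le_quarter {β : ℝ} (h0 : 0 < β) (hβ : β ≤ 1 / 4) :
    (1 + β) * (log 2 - log (1 + β)) ≤ -(β * log β) + (1 - β) ^ 2 * log 2 := by
  have h_log_one_add : β ≤ (1 + β) * log (1 + β) := by
    have hpos : 0 < 1 + β := by linarith
    calc β = (1 + β) * (1 - (1 + β)⁻¹) := by field_simp; ring
      _ ≤ (1 + β) * log (1 + β) := by gcongr; exact one_sub_inv_le_log_of_pos hpos
  have h_neg_log : 2 * log 2 ≤ -log β := by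
    have : log β ≤ log (2 ^ 2)⁻¹ := log_le_log h0 (by norm_num; linarith)
    rw [log_inv, log_pow] at this
    push_cast at this
    linarith
  have h_log_two : log 2 < 1 := by linarith [log_two_lt_d9]
  nlinarith [mul_le_mul_of_nonneg_left h_neg_log h0.le,
    mul_le_mul_of_nonneg_left h_log_two.le (by nlinarith : 0 ≤ β * (1 - β))]

lemma beta_log_ineq_of_quarter_lt {β : ℝ} (hβ : 1 / 4 < β) (h1 : β < 1) :
    (1 + β) * (log 2 - log (1 + β)) ≤ -(β * log β) + (1 - β) ^ 2 * log 2 := by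
  set t := 1 - β with ht
  have h_neg_log : t + t ^ 2 / 2 + t ^ 3 / 3 ≤ -log β := by
    have := sum_range_pow_div_le_neg_log_one_sub (x := t) (by linarith) (by linarith) 3
    norm_num [sum_range_succ, ht] at this
    linarith
  have h_log_ratio :
      log 2 - log (1 + β) ≤ t / 2 + (t / 2) ^ 2 / 2 + (t / 2) ^ 3 / ((1 + β) / 2) := by
    have h_abs : |t / 2| = t / 2 := abs_of_nonneg (by linarith)
    have := neg_log_one_sub_le_sum_range_pow_div_add (x := t / 2) (by rw [h_abs]; linarith) 2
    rw [h_abs, show 1 - t / 2 = (1 + β) / 2 by ring, log_div (by linarith) two_ne_zero] at this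
    norm_num [sum_range_succ] at this
    linarith
  have h_poly : 0 ≤ log 2 - 1 / 4 - 7 * t / 24 - t ^ 2 / 3 := by nlinarith [log_two_gt_d9]
  calc (1 + β) * (log 2 - log (1 + β))
      ≤ (1 + β) * (t / 2 + (t / 2) ^ 2 / 2 + (t / 2) ^ 3 / ((1 + β) / 2)) := by gcongr
    _ = (1 + β) * (t / 2 + t ^ 2 / 8) + t ^ 3 / 4 := by field_simp; ring
    _ ≤ β * (t + t ^ 2 / 2 + t ^ 3 / 3) + t ^ 2 * log 2 := by
        nlinarith [mul_nonneg (sq_nonneg t) h_poly]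
    _ ≤ -(β * log β) + t ^ 2 * log 2 := by
        nlinarith [mul_le_mul_of_nonneg_left h_neg_log (by linarith : 0 ≤ β)]

lemma beta_log_ineq {β : ℝ} (h0 : 0 < β) (h1 : β < 1) :
    (1 + β) * (log 2 - log (1 + β)) ≤ -(β * log β) + (1 - β) ^ 2 * log 2 := by
  rcases le_or_gt β (1 / 4) with hβ | hβ
  · exact beta_log_ineq_of_le_quarter h0 hβ
  · exact beta_log_ineq_of_quarter_lt hβ h1

/-- For `0 < β < 1`: `β·log₂(1/β) + (1-β)² ≥ (1+β)·log₂(2/(1+β))`. -/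
theorem beta_ineq_one (β : ℝ) (h0 : 0 < β) (h1 : β < 1) :
    β * Real.logb 2 (1 / β) + (1 - β) ^ 2 ≥ (1 + β) * Real.logb 2 (2 / (1 + β)) := by
  have h_log_two : 0 < log 2 := log_pos one_lt_two
  rw [ge_iff_le, logb, logb, log_div two_ne_zero (by linarith), one_div, log_inv, ← sub_nonneg]
  have : β * (-log β / log 2) + (1 - β) ^ 2 - (1 + β) * ((log 2 - log (1 + β)) / log 2)
      = (-(β * log β) + (1 - β) ^ 2 * log 2 - (1 + β) * (log 2 - log (1 + β))) / log 2 := by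
    field_simp
  rw [this]
  exact div_nonneg (by linarith [beta_log_ineq h0 h1]) h_log_two.le
end

section
/- For 0 < β < 1, the inequality (β + log₂(1+β))·log₂(1/β) ≥ 4β·log₂(2/(1+β)) holds. -/
/-- For `0 < β < 1`: `(β + log₂(1+β))·log₂(1/β) ≥ 4β·log₂(2/(1+β))`. -/
theorem beta_ineq_two (β : ℝ) (h0 : 0 < β) (h1 : β < 1) :
    (β + Real.logb 2 (1 + β)) * Real.logb 2 (1 / β) ≥
      4 * β * Real.logb 2 (2 / (1 + β)) := by
  have hb2 : (1:ℝ) < 2 := one_lt_two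
  -- Step 1: 2^β ≤ 1 + β via convexity of exp
  have hconv := convexOn_exp.2 (Set.mem_univ (Real.log 2)) (Set.mem_univ 0)
      (le_of_lt h0) (by linarith : (0:ℝ) ≤ 1 - β) (by ring)
  have hrpow : (2:ℝ) ^ β ≤ 1 + β := by
    have h2 : (2:ℝ) ^ β = Real.exp (β * Real.log 2) := by
      rw [Real.rpow_def_of_pos (by norm_num)]; ring_nf
    simp only [smul_eq_mul, mul_zero, add_zero, Real.exp_zero, Real.exp_log (by norm_num : (0:ℝ) < 2)] at hconv
    rw [h2]
    calc Real.exp (β * Real.log 2) ≤ β * 2 + (1 - β) * 1 := hconv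
      _ = 1 + β := by ring
  -- log₂(1+β) ≥ β
  have hlog1 : β ≤ Real.logb 2 (1 + β) := by
    have := Real.logb_le_logb_of_le hb2 (by positivity) hrpow
    rwa [Real.logb_rpow (by norm_num) (by norm_num)] at this
  -- log₂(1/β) ≥ 2 log₂(2/(1+β))
  have h1b : (0:ℝ) < 1 + β := by linarith
  have hkey : (2 / (1 + β)) ^ 2 ≤ 1 / β := by
    rw [div_pow, div_le_div_iff₀ (by positivity) h0]
    nlinarith [sq_nonneg (1 - β)]
  have hlog2 : 2 * Real.logb 2 (2 / (1 + β)) ≤ Real.logb 2 (1 / β) := by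
    have := Real.logb_le_logb_of_le hb2 (by positivity) hkey
    rwa [Real.logb_pow] at this
  -- positivity facts
  have hpos1 : 0 < Real.logb 2 (1 / β) := by
    apply Real.logb_pos hb2
    rw [lt_div_iff₀ h0]; linarith
  have hpos2 : 0 ≤ Real.logb 2 (2 / (1 + β)) := by
    apply Real.logb_nonneg hb2
    rw [le_div_iff₀ h1b]; linarith
  calc 4 * β * Real.logb 2 (2 / (1 + β))
      = 2 * β * (2 * Real.logb 2 (2 / (1 + β))) := by ring
    _ ≤ 2 * β * Real.logb 2 (1 / β) := by
        apply mul_le_mul_of_nonneg_left hlog2 (by linarith)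
    _ ≤ (β + Real.logb 2 (1 + β)) * Real.logb 2 (1 / β) := by
        apply mul_le_mul_of_nonneg_right (by linarith) hpos1.le
end
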